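/- For n ≥ 1 and s ≥ 0, the number of sequences (u_1, ..., u_n) of positive integers with u_n = n + s satisfying condition (1) equals C_{n−1}^(s) = ((s+1)/(2(n−1)+s+1)) * binomial(2(n−1)+s+1, n−1). -/

import Mathlib

/-!
Let `admissibleSeqs n s` be the set of sequences `u₀, …, uₙ` of positive integers satisfying
condition (1) with `uₙ = n + 1 + s` (indices start at 0). Condition (1) for the pair `(i, n)`
gives `uᵢ ≤ i + 1 + s`, so `u₀ = a + 1` with `a ≤ s`; for the pair `(0, j)` it says that every later
entry satisfies `uⱼ ≤ j` or `uⱼ ≥ j + 1 + a`. Deleting `u₀` and lowering the large entries by `a`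
is therefore a bijection onto `admissibleSeqs (n - 1) (s - a + 1)`. The counts thus satisfy
`N(n + 1, s) = ∑_{t=1}^{s+1} N(n, t)` and `N(0, s) = 1`, and so does `gc`, by summing the
Pascal-type rule `gc (n + 1) (k + 1) = gc (n + 1) k + gc n (k + 2)`.
-/

def gc (n k : ℕ) : ℚ := ((k : ℚ) + 1) / (2 * (n : ℚ) + (k : ℚ) + 1) * ((2 * n + k + 1).choose n : ℚ)

def cat (n : ℕ) : ℚ := 1 / ((n : ℚ) + 1) * ((2 * n).choose n : ℚ)

def Cond {n : ℕ} (u : Fin n → ℕ) : Prop :=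
  ∀ i j : Fin n, i < j →
    ¬(1 ≤ (u j : ℤ) - (((j : ℕ) : ℤ) - ((i : ℕ) : ℤ)) ∧
      (u j : ℤ) - (((j : ℕ) : ℤ) - ((i : ℕ) : ℤ)) ≤ (u i : ℤ) - 1)

open Finset

lemma gc_zero_left (k : ℕ) : gc 0 k = 1 := by
  have : (k : ℚ) + 1 ≠ 0 := by positivity
  simp [gc, this]

lemma gc_succ_zero (m : ℕ) : gc (m + 1) 0 = gc m 1 := by
  have absorb : ((2 * m + 3 : ℕ) : ℚ) * (2 * m + 2).choose m =
      (2 * m + 3).choose (m + 1) * (m + 1 : ℕ) := by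
    exact_mod_cast Nat.add_one_mul_choose_eq (2 * m + 2) m
  simp only [gc, show 2 * (m + 1) + 0 + 1 = 2 * m + 3 by ring, show 2 * m + 1 + 1 = 2 * m + 2 by ring]
  push_cast at absorb ⊢
  field_simp
  linear_combination (-2 : ℚ) * absorb

lemma gc_succ_succ (m k : ℕ) : gc (m + 1) (k + 1) = gc (m + 1) k + gc m (k + 2) := by
  have pascal : ((2 * m + k + 4).choose (m + 1) : ℚ) =
      (2 * m + k + 3).choose m + (2 * m + k + 3).choose (m + 1) := by
    exact_mod_cast Nat.choose_succ_succ (2 * m + k + 3) m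
  have absorb : ((2 * m + k + 4 : ℕ) : ℚ) * (2 * m + k + 3).choose m =
      (2 * m + k + 4).choose (m + 1) * (m + 1 : ℕ) := by
    exact_mod_cast Nat.add_one_mul_choose_eq (2 * m + k + 3) m
  simp only [gc, show 2 * (m + 1) + (k + 1) + 1 = 2 * m + k + 4 by ring,
    show 2 * (m + 1) + k + 1 = 2 * m + k + 3 by ring, show 2 * m + (k + 2) + 1 = 2 * m + k + 3 by ring]
  push_cast at absorb pascal ⊢
  rw [pascal] at absorb ⊢
  field_simp
  linear_combination (-2 * (2 * (m : ℚ) + k + 3)) * absorb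

lemma gc_succ_eq_sum (m k : ℕ) : gc (m + 1) k = ∑ t ∈ range (k + 1), gc m (t + 1) := by
  induction k with
  | zero => simp [gc_succ_zero]
  | succ k ih => rw [sum_range_succ, ← ih, gc_succ_succ]

lemma cond_iff {n : ℕ} (u : Fin n → ℕ) :
    Cond u ↔ ∀ i j : Fin n, (i : ℕ) < j → u j + i ≤ j ∨ u i + j ≤ u j + i := by
  refine forall₂_congr fun i j => ?_
  rw [Fin.lt_def]
  omega

def admissibleSeqs (n s : ℕ) : Set (Fin (n + 1) → ℕ) :=
  {u | (∀ i, 1 ≤ u i) ∧ u (Fin.last n) = n + 1 + s ∧ Cond u}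

section AdmissibleSeqs

variable {m n s a t : ℕ}

lemma apply_le_of_mem_admissibleSeqs {u : Fin (n + 1) → ℕ} (hu : u ∈ admissibleSeqs n s)
    (i : Fin (n + 1)) : u i ≤ i + 1 + s := by
  obtain ⟨-, hlast, hcond⟩ := hu
  rcases (Fin.le_last i).lt_or_eq with hi | rfl
  · have := (cond_iff u).mp hcond i (Fin.last n) hi
    simp only [hlast, Fin.val_last] at this
    omega
  · simp [hlast]

lemma admissibleSeqs_finite (n s : ℕ) : (admissibleSeqs n s).Finite :=
  (Set.finite_Iic fun _ => n + 1 + s).subset fun u hu i =>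
    (apply_le_of_mem_admissibleSeqs hu i).trans (by have := i.is_le; show _ ≤ n + 1 + s; omega)

lemma admissibleSeqs_zero (s : ℕ) : admissibleSeqs 0 s = {fun _ => 1 + s} := by
  ext u
  constructor
  · rintro ⟨-, hlast, -⟩
    funext i
    rw [Fin.fin_one_eq_zero i, ← hlast]
    rfl
  · rintro rfl
    exact ⟨fun _ => Nat.le_add_right 1 s, by simp, fun i j hij => by have := Fin.lt_def.mp hij; omega⟩

lemma Cond.apply_succ_le_or_add_le {u : Fin (m + 2) → ℕ} (hu : Cond u) (h0 : u 0 = a + 1)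
    (j : Fin (m + 1)) :
    u j.succ ≤ j + 1 ∨ j + 2 + a ≤ u j.succ := by
  have := (cond_iff u).mp hu 0 j.succ (by simp)
  simp only [h0, Fin.val_zero, Fin.val_succ] at this
  omega

def removeHead (a : ℕ) (u : Fin (m + 2) → ℕ) : Fin (m + 1) → ℕ :=
  fun j => if u j.succ ≤ j + 1 then u j.succ else u j.succ - a

def insertHead (a : ℕ) (w : Fin (m + 1) → ℕ) : Fin (m + 2) → ℕ :=
  Fin.cons (a + 1) fun j => if w j ≤ j + 1 then w j else w j + a

@[simp]
lemma insertHead_zero (a : ℕ) (w : Fin (m + 1) → ℕ) : insertHead a w 0 = a + 1 :=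
  Fin.cons_zero _ _

@[simp]
lemma insertHead_succ (a : ℕ) (w : Fin (m + 1) → ℕ) (j : Fin (m + 1)) :
    insertHead a w j.succ = if w j ≤ j + 1 then w j else w j + a :=
  Fin.cons_succ _ _ _

lemma removeHead_insertHead (a : ℕ) (w : Fin (m + 1) → ℕ) : removeHead a (insertHead a w) = w := by
  funext j
  simp only [removeHead, insertHead_succ]
  split_ifs <;> omega

lemma insertHead_removeHead {u : Fin (m + 2) → ℕ} (hu : Cond u) (h0 : u 0 = a + 1) :
    insertHead a (removeHead a u) = u := by
  funext i
  refine Fin.cases (by simp [h0]) (fun j => ?_) i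
  have := hu.apply_succ_le_or_add_le h0 j
  simp only [insertHead_succ, removeHead]
  split_ifs <;> omega

lemma removeHead_mem {u : Fin (m + 2) → ℕ} (hu : u ∈ admissibleSeqs (m + 1) (a + t))
    (h0 : u 0 = a + 1) : removeHead a u ∈ admissibleSeqs m (t + 1) := by
  obtain ⟨hpos, hlast, hcond⟩ := hu
  refine ⟨fun j => ?_, ?_, (cond_iff _).mpr fun i j hij => ?_⟩
  · have := hcond.apply_succ_le_or_add_le h0 j
    have := hpos j.succ
    simp only [removeHead]
    split_ifs <;> omega
  · have := hcond.apply_succ_le_or_add_le h0 (Fin.last m)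
    simp only [removeHead, Fin.succ_last, hlast, Fin.val_last] at this ⊢
    split_ifs <;> omega
  · have := (cond_iff u).mp hcond i.succ j.succ (by simpa using hij)
    have := hcond.apply_succ_le_or_add_le h0 i
    have := hcond.apply_succ_le_or_add_le h0 j
    simp only [removeHead, Fin.val_succ] at *
    split_ifs <;> omega

lemma insertHead_mem {w : Fin (m + 1) → ℕ} (hw : w ∈ admissibleSeqs m (t + 1)) :
    insertHead a w ∈ admissibleSeqs (m + 1) (a + t) := by
  obtain ⟨hpos, hlast, hcond⟩ := hw
  refine ⟨fun i => ?_, ?_, (cond_iff _).mpr fun i j hij => ?_⟩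
  · induction i using Fin.cases with
    | zero => simp
    | succ j =>
      have := hpos j
      simp only [insertHead_succ]
      split_ifs <;> omega
  · rw [← Fin.succ_last, insertHead_succ, hlast]
    simp only [Fin.val_last]
    split_ifs <;> omega
  · induction j using Fin.cases with
    | zero => simp at hij
    | succ j =>
      induction i using Fin.cases with
      | zero =>
        simp only [insertHead_zero, insertHead_succ, Fin.val_zero, Fin.val_succ]
        split_ifs <;> omega
      | succ i =>
        have := (cond_iff w).mp hcond i j (by simpa using hij)
        simp only [insertHead_succ, Fin.val_succ]
        split_ifs <;> omega

lemma ncard_admissibleSeqs_head_eq (m a t : ℕ) :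
    {u ∈ admissibleSeqs (m + 1) (a + t) | u 0 = a + 1}.ncard = (admissibleSeqs m (t + 1)).ncard := by
  refine Set.BijOn.ncard_eq (f := removeHead a) (Set.InvOn.bijOn (f' := insertHead a) ?_ ?_ ?_)
  · exact ⟨fun u hu => insertHead_removeHead hu.1.2.2 hu.2, fun w _ => removeHead_insertHead a w⟩
  · exact fun u hu => removeHead_mem hu.1 hu.2
  · exact fun w hw => ⟨insertHead_mem hw, insertHead_zero a w⟩

end AdmissibleSeqs

lemma Set.ncard_eq_sum_ncard_fiberwise {α β : Type*} [DecidableEq β] {S : Set α} (hS : S.Finite)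
    {g : α → β} {t : Finset β} (hg : S.MapsTo g t) :
    S.ncard = ∑ b ∈ t, {x ∈ S | g x = b}.ncard := by
  rw [Set.ncard_eq_toFinset_card S hS,
    card_eq_sum_card_fiberwise fun x hx => hg (hS.mem_toFinset.mp hx)]
  refine sum_congr rfl fun b _ => ?_
  rw [← Set.ncard_coe_finset]
  congr 1
  ext x
  simp

lemma ncard_admissibleSeqs_succ (m s : ℕ) :
    (admissibleSeqs (m + 1) s).ncard = ∑ a ∈ range (s + 1), (admissibleSeqs m (s - a + 1)).ncard := by
  have head_mem (u) (hu : u ∈ admissibleSeqs (m + 1) s) : u 0 - 1 ∈ range (s + 1) := by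
    have := apply_le_of_mem_admissibleSeqs hu 0
    rw [Fin.val_zero, mem_range] at *
    omega
  rw [Set.ncard_eq_sum_ncard_fiberwise (admissibleSeqs_finite _ _) head_mem]
  refine sum_congr rfl fun a ha => ?_
  have hs : a + (s - a) = s := by have := mem_range.mp ha; omega
  rw [← ncard_admissibleSeqs_head_eq m a (s - a), hs]
  congr 1
  ext u
  refine and_congr_right fun hu => ?_
  have := hu.1 0
  omega

lemma ncard_admissibleSeqs (m s : ℕ) : ((admissibleSeqs m s).ncard : ℚ) = gc m s := by
  induction m generalizing s with
  | zero => simp [admissibleSeqs_zero, gc_zero_left]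
  | succ m ih =>
    rw [ncard_admissibleSeqs_succ, gc_succ_eq_sum, ← sum_range_reflect (fun t => gc m (t + 1))]
    push_cast
    exact sum_congr rfl fun a _ => by rw [ih]

theorem stmt8 (n s : ℕ) (hn : 1 ≤ n) :
    ({u : Fin n → ℕ | (∀ i, 1 ≤ u i) ∧ u ⟨n - 1, by omega⟩ = n + s ∧ Cond u}.ncard : ℚ)
      = gc (n - 1) s := by
  obtain ⟨m, rfl⟩ : ∃ m, n = m + 1 := ⟨n - 1, by omega⟩
  exact ncard_admissibleSeqs m s
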